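/- If the admissible ideal I on ℕ satisfies the condition (AP), then for every sequence (x_n) in a normed linear space and every r ≥ 0, the rough I-limit set of degree r equals the rough I*-limit set of degree r. -/

import Mathlib

/-- `I` is an ideal of subsets of ℕ: closed under finite unions and subsets. -/
def IsIdeal (I : Set (Set ℕ)) : Prop :=
  (∀ A B : Set ℕ, A ∈ I → B ∈ I → A ∪ B ∈ I) ∧
  (∀ A B : Set ℕ, A ∈ I → B ⊆ A → B ∈ I)

/-- A nontrivial admissible ideal: an ideal containing all singletons, with ℕ ∉ I. -/
def IsAdmissibleIdeal (I : Set (Set ℕ)) : Prop :=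
  IsIdeal I ∧ (∀ n : ℕ, ({n} : Set ℕ) ∈ I) ∧ (Set.univ : Set ℕ) ∉ I

/-- The subsequence of `x` over `M` rough converges to `l` of degree `r`:
for each ε > 0, ‖x m − l‖ < r + ε for all but finitely many m ∈ M. -/
def RoughConvAlong {X : Type*} [NormedAddCommGroup X]
    (M : Set ℕ) (x : ℕ → X) (r : ℝ) (l : X) : Prop :=
  ∀ ε > (0:ℝ), {m ∈ M | r + ε ≤ ‖x m - l‖}.Finite

/-- Rough I-convergence of degree r to l. -/
def RoughIConv (I : Set (Set ℕ)) {X : Type*} [NormedAddCommGroup X]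
    (x : ℕ → X) (r : ℝ) (l : X) : Prop :=
  ∀ ε > (0:ℝ), {n : ℕ | r + ε ≤ ‖x n - l‖} ∈ I

/-- Rough I*-convergence of degree r to l. -/
def RoughIStarConv (I : Set (Set ℕ)) {X : Type*} [NormedAddCommGroup X]
    (x : ℕ → X) (r : ℝ) (l : X) : Prop :=
  ∃ M : Set ℕ, Mᶜ ∈ I ∧ RoughConvAlong M x r l

/-- The trace ideal K|M = {A ∩ M : A ∈ K}. -/
def traceIdeal (K : Set (Set ℕ)) (M : Set ℕ) : Set (Set ℕ) :=
  {A | ∃ B ∈ K, A = B ∩ M}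

/-- Rough I^K-convergence of degree r to l: there is M with Mᶜ ∈ I such that the
set of indices of the subsequence over M lying outside the (r+ε)-ball belongs to K|M. -/
def RoughIKConv (I K : Set (Set ℕ)) {X : Type*} [NormedAddCommGroup X]
    (x : ℕ → X) (r : ℝ) (l : X) : Prop :=
  ∃ M : Set ℕ, Mᶜ ∈ I ∧
    ∀ ε > (0:ℝ), {m ∈ M | r + ε ≤ ‖x m - l‖} ∈ traceIdeal K M

/-- The condition (AP) for an ideal I. -/
def APcond (I : Set (Set ℕ)) : Prop :=
  ∀ A : ℕ → Set ℕ, (∀ j, A j ∈ I) → (Pairwise (Function.onFun Disjoint A)) →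
    ∃ B : ℕ → Set ℕ, (∀ j, B j ∈ I) ∧ (∀ j, (symmDiff (A j) (B j)).Finite) ∧
      (⋃ j, B j) ∈ I

/-- The condition AP(I,K). -/
def APIK (I K : Set (Set ℕ)) : Prop :=
  ∀ A : ℕ → Set ℕ, (∀ j, A j ∈ I) → (Pairwise (Function.onFun Disjoint A)) →
    ∃ B : ℕ → Set ℕ, (∀ j, B j ∈ I) ∧ (∀ j, symmDiff (A j) (B j) ∈ K) ∧
      (⋃ j, B j) ∈ I

lemma IsAdmissibleIdeal.mem_of_finite {I : Set (Set ℕ)} (hI : IsAdmissibleIdeal I)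
    {A : Set ℕ} (hA : A.Finite) : A ∈ I := by
  obtain ⟨⟨hunion, hsub⟩, hsingleton, -⟩ := hI
  induction A, hA using Set.Finite.induction_on with
  | empty => exact hsub _ _ (hsingleton 0) (Set.empty_subset _)
  | insert _ _ ih => exact Set.insert_eq .. ▸ hunion _ _ (hsingleton _) ih

/-- Apply (AP) to the disjointification of `A`: each `A j` lies in finitely many of its pieces,
and each piece differs from the corresponding `B i` by a finite set. -/
lemma APcond.exists_compl_mem_forall_inter_finite {I : Set (Set ℕ)} (hI : IsIdeal I)
    (hAP : APcond I) {A : ℕ → Set ℕ} (hA : ∀ j, A j ∈ I) :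
    ∃ M : Set ℕ, Mᶜ ∈ I ∧ ∀ j, (A j ∩ M).Finite := by
  obtain ⟨B, -, hBA, hB⟩ := hAP (disjointed A) (fun j ↦ hI.2 _ _ (hA j) (disjointed_le A j))
    (disjoint_disjointed A)
  refine ⟨(⋃ j, B j)ᶜ, by rwa [compl_compl], fun j ↦ ?_⟩
  have hcover : A j ∩ (⋃ i, B i)ᶜ ⊆ ⋃ i ∈ Finset.range (j + 1), disjointed A i \ B i := by
    rintro m ⟨hmA, hmB⟩
    have hm : m ∈ ⋃ i ∈ Finset.range (j + 1), disjointed A i := by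
      rw [biUnion_range_succ_disjointed]
      exact le_partialSups A j hmA
    simp only [Set.mem_iUnion] at hm ⊢
    obtain ⟨i, hi, hmi⟩ := hm
    exact ⟨i, hi, hmi, fun hmBi ↦ hmB (Set.mem_iUnion_of_mem i hmBi)⟩
  refine Set.Finite.subset (Set.Finite.biUnion (Finset.range (j + 1)).finite_toSet
    fun i _ ↦ (hBA i).subset ?_) hcover
  rw [symmDiff_def]
  exact le_sup_left

lemma RoughIConv.roughIStarConv {I : Set (Set ℕ)} (hI : IsIdeal I) (hAP : APcond I)
    {X : Type*} [NormedAddCommGroup X] {x : ℕ → X} {r : ℝ} {l : X} (h : RoughIConv I x r l) :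
    RoughIStarConv I x r l := by
  obtain ⟨M, hM, hfinite⟩ := hAP.exists_compl_mem_forall_inter_finite hI
    (A := fun j ↦ {n | r + 1 / (j + 1) ≤ ‖x n - l‖}) fun j ↦ h _ Nat.one_div_pos_of_nat
  refine ⟨M, hM, fun ε hε ↦ ?_⟩
  obtain ⟨j, hj⟩ := exists_nat_one_div_lt hε
  refine (hfinite j).subset fun m ⟨hmM, hm⟩ ↦ ⟨?_, hmM⟩
  change r + 1 / (j + 1) ≤ ‖x m - l‖
  linarith

lemma RoughIStarConv.roughIConv {I : Set (Set ℕ)} (hI : IsAdmissibleIdeal I)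
    {X : Type*} [NormedAddCommGroup X] {x : ℕ → X} {r : ℝ} {l : X} (h : RoughIStarConv I x r l) :
    RoughIConv I x r l := by
  obtain ⟨M, hM, hconv⟩ := h
  intro ε hε
  have hcover : {n | r + ε ≤ ‖x n - l‖} ⊆ Mᶜ ∪ {m ∈ M | r + ε ≤ ‖x m - l‖} := fun n hn ↦
    (em (n ∈ M)).elim (fun hnM ↦ Or.inr ⟨hnM, hn⟩) Or.inl
  exact hI.1.2 _ _ (hI.1.1 _ _ hM (hI.mem_of_finite (hconv ε hε))) hcover

theorem stmt2_general {X : Type*} [NormedAddCommGroup X]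
    (I : Set (Set ℕ)) (hI : IsAdmissibleIdeal I) (hAP : APcond I)
    (x : ℕ → X) (r : ℝ) :
    {l : X | RoughIConv I x r l} = {l : X | RoughIStarConv I x r l} :=
  Set.ext fun _ ↦ ⟨RoughIConv.roughIStarConv hI.1 hAP, RoughIStarConv.roughIConv hI⟩

theorem stmt2 {X : Type*} [NormedAddCommGroup X] [NormedSpace ℝ X]
    (I : Set (Set ℕ)) (hI : IsAdmissibleIdeal I) (hAP : APcond I)
    (x : ℕ → X) (r : ℝ) (hr : 0 ≤ r) :
    {l : X | RoughIConv I x r l} = {l : X | RoughIStarConv I x r l} :=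
  stmt2_general I hI hAP x r
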